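/- arXiv:math/0209396 — 6 statements merged into one kernel-verified Lean document; each statement's English description precedes it below -/
import Mathlib

section
/- Let f, g, h : ℝ³ → ℝ be smooth and define the complex-valued function F = (h + i f)·exp(−i g). Then for every x ∈ ℝ³, the complex vector field c = exp(i g)·∇F satisfies: the real part of c(x) equals f(x)·∇g(x) + ∇h(x) and the imaginary part of c(x) equals ∇f(x) − h(x)·∇g(x). In particular, a vector field v = f∇g + ∇h is the real part of the complex field c = exp(i g)∇F, whose imaginary part is the Baldwin (topological) dual w = −h∇g + ∇f. -/
open RealInnerProductSpace

private lemma grad_apply (φ : EuclideanSpace ℝ (Fin 3) → ℝ) (x : EuclideanSpace ℝ (Fin 3)) (i : Fin 3) :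
    gradient φ x i = fderiv ℝ φ x (EuclideanSpace.single i 1) := by
  have h1 : (fderiv ℝ φ x) (EuclideanSpace.single i 1)
      = ⟪gradient φ x, (EuclideanSpace.single i 1 : EuclideanSpace ℝ (Fin 3))⟫ := by
    rw [gradient]; exact (InnerProductSpace.toDual_symm_apply).symm
  rw [h1, EuclideanSpace.inner_single_right]; simp

/-- For smooth `f g h : ℝ³ → ℝ` and `F = (h + i f)·exp(−i g)`, the
complex vector field `c = exp(i g)·∇F` (componentwise gradient of `F`) has real
part `f∇g + ∇h` and imaginary part `∇f − h∇g`, componentwise. -/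
theorem baldwin_dual_vector_field (f g h : EuclideanSpace ℝ (Fin 3) → ℝ)
    (hf : ContDiff ℝ (⊤ : ℕ∞) f) (hg : ContDiff ℝ (⊤ : ℕ∞) g) (hh : ContDiff ℝ (⊤ : ℕ∞) h)
    (F : EuclideanSpace ℝ (Fin 3) → ℂ)
    (hF : ∀ x, F x = ((h x : ℂ) + Complex.I * (f x : ℂ)) *
      Complex.exp (-(Complex.I * (g x : ℂ))))
    (c : EuclideanSpace ℝ (Fin 3) → Fin 3 → ℂ)
    (hc : ∀ x i, c x i = Complex.exp (Complex.I * (g x : ℂ)) *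
        ((gradient (fun y => (F y).re) x i : ℂ)
          + Complex.I * (gradient (fun y => (F y).im) x i : ℂ))) :
    ∀ x i, (c x i).re = f x * gradient g x i + gradient h x i ∧
           (c x i).im = gradient f x i - h x * gradient g x i := by
  intro x i
  have Hf : HasFDerivAt f (fderiv ℝ f x) x := (hf.differentiable (by simp) x).hasFDerivAt
  have Hg : HasFDerivAt g (fderiv ℝ g x) x := (hg.differentiable (by simp) x).hasFDerivAt
  have Hh : HasFDerivAt h (fderiv ℝ h x) x := (hh.differentiable (by simp) x).hasFDerivAt
  have Hcos : HasFDerivAt (fun y => Real.cos (g y)) ((-Real.sin (g x)) • fderiv ℝ g x) x :=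
    (Real.hasDerivAt_cos (g x)).comp_hasFDerivAt x Hg
  have Hsin : HasFDerivAt (fun y => Real.sin (g y)) ((Real.cos (g x)) • fderiv ℝ g x) x :=
    (Real.hasDerivAt_sin (g x)).comp_hasFDerivAt x Hg
  have HRe : HasFDerivAt (fun y => h y * Real.cos (g y) + f y * Real.sin (g y))
      ((h x • ((-Real.sin (g x)) • fderiv ℝ g x) + Real.cos (g x) • fderiv ℝ h x)
        + (f x • ((Real.cos (g x)) • fderiv ℝ g x) + Real.sin (g x) • fderiv ℝ f x)) x :=
    (Hh.mul Hcos).add (Hf.mul Hsin)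
  have HIm : HasFDerivAt (fun y => f y * Real.cos (g y) - h y * Real.sin (g y))
      ((f x • ((-Real.sin (g x)) • fderiv ℝ g x) + Real.cos (g x) • fderiv ℝ f x)
        - (h x • ((Real.cos (g x)) • fderiv ℝ g x) + Real.sin (g x) • fderiv ℝ h x)) x :=
    (Hf.mul Hcos).sub (Hh.mul Hsin)
  have hre : (fun y => (F y).re) = fun y => h y * Real.cos (g y) + f y * Real.sin (g y) := by
    funext y
    rw [hF]
    simp [Complex.exp_re, Complex.exp_im, Complex.mul_re, Complex.mul_im]
    try ring
  have him : (fun y => (F y).im) = fun y => f y * Real.cos (g y) - h y * Real.sin (g y) := by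
    funext y
    rw [hF]
    simp [Complex.exp_re, Complex.exp_im, Complex.mul_re, Complex.mul_im]
    try ring
  set A := gradient f x i with hA
  set B := gradient g x i with hB
  set C := gradient h x i with hC
  have hAe : fderiv ℝ f x (EuclideanSpace.single i 1) = A := (grad_apply f x i).symm
  have hBe : fderiv ℝ g x (EuclideanSpace.single i 1) = B := (grad_apply g x i).symm
  have hCe : fderiv ℝ h x (EuclideanSpace.single i 1) = C := (grad_apply h x i).symm
  have gRe : gradient (fun y => (F y).re) x i
      = Real.cos (g x) * C - h x * Real.sin (g x) * B
        + Real.sin (g x) * A + f x * Real.cos (g x) * B := by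
    rw [grad_apply, hre, HRe.fderiv]
    simp [hAe, hBe, hCe]
    ring
  have gIm : gradient (fun y => (F y).im) x i
      = Real.cos (g x) * A - f x * Real.sin (g x) * B
        - Real.sin (g x) * C - h x * Real.cos (g x) * B := by
    rw [grad_apply, him, HIm.fderiv]
    simp [hAe, hBe, hCe]
    ring
  rw [hc, gRe, gIm]
  have hpy := Real.sin_sq_add_cos_sq (g x)
  constructor
  · simp [Complex.exp_re, Complex.exp_im, Complex.mul_re, Complex.mul_im, Complex.add_re,
      Complex.add_im]
    simp only [Complex.cos_ofReal_re, Complex.sin_ofReal_re]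
    linear_combination (C + f x * B) * hpy
  · simp [Complex.exp_re, Complex.exp_im, Complex.mul_re, Complex.mul_im, Complex.add_re,
      Complex.add_im]
    simp only [Complex.cos_ofReal_re, Complex.sin_ofReal_re]
    linear_combination (A - h x * B) * hpy
end

section
/- Let f, g, h : ℝⁿ → ℝ be smooth, let A = f dg + dh and let Ã = −h dg + df be its Baldwin dual. Then dÃ − dg ∧ A = 0; explicitly, for all x ∈ ℝⁿ and all vectors u, v: (D(Ã)(x)u)(v) − (D(Ã)(x)v)(u) − Dg(x)(u)·A(x)(v) + Dg(x)(v)·A(x)(u) = 0. -/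
/-- For smooth `f g h : ℝⁿ → ℝ`, `A = f dg + dh` and its Baldwin
dual `Ã = −h dg + df` satisfy `dÃ − dg ∧ A = 0`. -/
theorem baldwin_dDual_minus_dg_wedge_A (n : ℕ) (f g h : (Fin n → ℝ) → ℝ)
    (hf : ContDiff ℝ (⊤ : ℕ∞) f) (hg : ContDiff ℝ (⊤ : ℕ∞) g) (hh : ContDiff ℝ (⊤ : ℕ∞) h)
    (A Ad : (Fin n → ℝ) → (Fin n → ℝ) →L[ℝ] ℝ)
    (hA : ∀ x, A x = f x • fderiv ℝ g x + fderiv ℝ h x)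
    (hAd : ∀ x, Ad x = (-(h x)) • fderiv ℝ g x + fderiv ℝ f x) :
    ∀ (x u v : Fin n → ℝ),
      fderiv ℝ Ad x u v - fderiv ℝ Ad x v u
        - fderiv ℝ g x u * A x v + fderiv ℝ g x v * A x u = 0 := by
  intro x u v
  have hAd' : Ad = fun y => (-(h y)) • fderiv ℝ g y + fderiv ℝ f y := funext hAd
  -- second derivatives
  have hg' : ContDiff ℝ (⊤ : ℕ∞) (fderiv ℝ g) := (hg.fderiv_right (by simp))
  have hf' : ContDiff ℝ (⊤ : ℕ∞) (fderiv ℝ f) := (hf.fderiv_right (by simp))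
  have hg'x : HasFDerivAt (fderiv ℝ g) (fderiv ℝ (fderiv ℝ g) x) x :=
    (hg'.differentiable (by simp) x).hasFDerivAt
  have hf'x : HasFDerivAt (fderiv ℝ f) (fderiv ℝ (fderiv ℝ f) x) x :=
    (hf'.differentiable (by simp) x).hasFDerivAt
  have hhx : HasFDerivAt (fun y => -(h y)) (-(fderiv ℝ h x)) x :=
    ((hh.differentiable (by simp) x).hasFDerivAt).neg
  have hF : HasFDerivAt Ad
      (((-(h x)) • fderiv ℝ (fderiv ℝ g) x + (-(fderiv ℝ h x)).smulRight (fderiv ℝ g x))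
        + fderiv ℝ (fderiv ℝ f) x) x := by
    rw [hAd']
    exact (hhx.smul hg'x).add hf'x
  have hDAd : fderiv ℝ Ad x =
      ((-(h x)) • fderiv ℝ (fderiv ℝ g) x + (-(fderiv ℝ h x)).smulRight (fderiv ℝ g x))
        + fderiv ℝ (fderiv ℝ f) x := hF.fderiv
  have hsymg : fderiv ℝ (fderiv ℝ g) x u v = fderiv ℝ (fderiv ℝ g) x v u :=
    second_derivative_symmetric (fun y => (hg.differentiable (by simp) y).hasFDerivAt) hg'x u v
  have hsymf : fderiv ℝ (fderiv ℝ f) x u v = fderiv ℝ (fderiv ℝ f) x v u :=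
    second_derivative_symmetric (fun y => (hf.differentiable (by simp) y).hasFDerivAt) hf'x u v
  rw [hDAd, hA x]
  simp only [ContinuousLinearMap.add_apply, ContinuousLinearMap.smul_apply,
    ContinuousLinearMap.smulRight_apply, ContinuousLinearMap.neg_apply, smul_eq_mul]
  rw [hsymg, hsymf]
  ring
end

section
/- Let f, g, h : ℝⁿ → ℝ be smooth, let A = f dg + dh and let Ã = −h dg + df be its Baldwin dual. Then the 3-form A ∧ dÃ vanishes identically: for all x and all vectors u₁, u₂, u₃, A(x)(u₁)·dÃ(x)(u₂,u₃) − A(x)(u₂)·dÃ(x)(u₁,u₃) + A(x)(u₃)·dÃ(x)(u₁,u₂) = 0. -/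
/-- For smooth `f g h : ℝⁿ → ℝ`, `A = f dg + dh` and its Baldwin
dual `Ã = −h dg + df` satisfy `A ∧ dÃ = 0` as a 3-form. -/
theorem baldwin_A_wedge_dDual_eq_zero (n : ℕ) (f g h : (Fin n → ℝ) → ℝ)
    (hf : ContDiff ℝ (⊤ : ℕ∞) f) (hg : ContDiff ℝ (⊤ : ℕ∞) g) (hh : ContDiff ℝ (⊤ : ℕ∞) h)
    (A Ad : (Fin n → ℝ) → (Fin n → ℝ) →L[ℝ] ℝ)
    (hA : ∀ x, A x = f x • fderiv ℝ g x + fderiv ℝ h x)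
    (hAd : ∀ x, Ad x = (-(h x)) • fderiv ℝ g x + fderiv ℝ f x)
    (dAd : (Fin n → ℝ) → (Fin n → ℝ) → (Fin n → ℝ) → ℝ)
    (hdAd : ∀ x u v, dAd x u v = fderiv ℝ Ad x u v - fderiv ℝ Ad x v u) :
    ∀ (x u₁ u₂ u₃ : Fin n → ℝ),
      A x u₁ * dAd x u₂ u₃ - A x u₂ * dAd x u₁ u₃ + A x u₃ * dAd x u₁ u₂ = 0 := by
  intro x u₁ u₂ u₃
  have hgd : Differentiable ℝ g := hg.differentiable (by simp)
  have hfd : Differentiable ℝ f := hf.differentiable (by simp)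
  have hhd : Differentiable ℝ h := hh.differentiable (by simp)
  have hDg : Differentiable ℝ (fderiv ℝ g) := (hg.fderiv_right (m := 1) (WithTop.coe_le_coe.mpr le_top)).differentiable one_ne_zero
  have hDf : Differentiable ℝ (fderiv ℝ f) := (hf.fderiv_right (m := 1) (WithTop.coe_le_coe.mpr le_top)).differentiable one_ne_zero
  have symg : ∀ u v, fderiv ℝ (fderiv ℝ g) x u v = fderiv ℝ (fderiv ℝ g) x v u :=
    second_derivative_symmetric (fun y => (hgd y).hasFDerivAt) ((hDg x).hasFDerivAt)
  have symf : ∀ u v, fderiv ℝ (fderiv ℝ f) x u v = fderiv ℝ (fderiv ℝ f) x v u :=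
    second_derivative_symmetric (fun y => (hfd y).hasFDerivAt) ((hDf x).hasFDerivAt)
  have hAd_fun : Ad = fun y => (-(h y)) • fderiv ℝ g y + fderiv ℝ f y := funext hAd
  have hDAd : ∀ u v : Fin n → ℝ, fderiv ℝ Ad x u v =
      -(h x) * fderiv ℝ (fderiv ℝ g) x u v + (-(fderiv ℝ h x u)) * fderiv ℝ g x v
        + fderiv ℝ (fderiv ℝ f) x u v := by
    intro u v
    have hc : DifferentiableAt ℝ (fun y => -(h y)) x := (hhd x).neg
    have h1 : DifferentiableAt ℝ (fun y => (-(h y)) • fderiv ℝ g y) x := hc.smul (hDg x)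
    have heq : fderiv ℝ Ad x = fderiv ℝ (fun y => (-(h y)) • fderiv ℝ g y) x
        + fderiv ℝ (fderiv ℝ f) x := by
      rw [hAd_fun]
      exact fderiv_add h1 (hDf x)
    have hsm : fderiv ℝ (fun y => (-(h y)) • fderiv ℝ g y) x =
        (-(h x)) • fderiv ℝ (fderiv ℝ g) x
          + (fderiv ℝ (fun y => -(h y)) x).smulRight (fderiv ℝ g x) :=
      fderiv_smul hc (hDg x)
    have hcn : fderiv ℝ (fun y => -(h y)) x = -(fderiv ℝ h x) := fderiv_neg
    rw [heq, hsm, hcn]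
    simp [smul_eq_mul]
  have hdAd' : ∀ u v : Fin n → ℝ, dAd x u v =
      fderiv ℝ g x u * fderiv ℝ h x v - fderiv ℝ g x v * fderiv ℝ h x u := by
    intro u v
    rw [hdAd, hDAd, hDAd, symg u v, symf u v]
    ring
  rw [hA, hdAd', hdAd', hdAd']
  simp only [ContinuousLinearMap.add_apply, ContinuousLinearMap.coe_smul',
    Pi.smul_apply, smul_eq_mul]
  ring
end

section
/- Let f₁, f₂, f₃, f₄, f₇ : ℝⁿ → ℝ be smooth, and define the 1-forms A = f₁ df₂ + f₃ df₄ + df₇, A~2 = df₃ − f₇ df₄, A~3 = f₃ df₂ − f₁ df₄. Then dA~2 − df₄ ∧ A + df₂ ∧ A~3 = 0 as 2-forms on ℝⁿ. -/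
/-- For smooth `f₁ f₂ f₃ f₄ f₇ : ℝⁿ → ℝ`, with
`A = f₁ df₂ + f₃ df₄ + df₇`, `A~2 = df₃ − f₇ df₄`, `A~3 = f₃ df₂ − f₁ df₄`,
one has `dA~2 − df₄ ∧ A + df₂ ∧ A~3 = 0`. -/
theorem quaternionic_baldwin_dA2_relation (n : ℕ) (f₁ f₂ f₃ f₄ f₇ : (Fin n → ℝ) → ℝ)
    (h₁ : ContDiff ℝ (⊤ : ℕ∞) f₁) (h₂ : ContDiff ℝ (⊤ : ℕ∞) f₂) (h₃ : ContDiff ℝ (⊤ : ℕ∞) f₃)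
    (h₄ : ContDiff ℝ (⊤ : ℕ∞) f₄) (h₇ : ContDiff ℝ (⊤ : ℕ∞) f₇)
    (A A2 A3 : (Fin n → ℝ) → (Fin n → ℝ) →L[ℝ] ℝ)
    (hA : ∀ x, A x = f₁ x • fderiv ℝ f₂ x + f₃ x • fderiv ℝ f₄ x + fderiv ℝ f₇ x)
    (hA2 : ∀ x, A2 x = fderiv ℝ f₃ x - f₇ x • fderiv ℝ f₄ x)
    (hA3 : ∀ x, A3 x = f₃ x • fderiv ℝ f₂ x - f₁ x • fderiv ℝ f₄ x) :
    ∀ (x u v : Fin n → ℝ),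
      (fderiv ℝ A2 x u v - fderiv ℝ A2 x v u)
        - (fderiv ℝ f₄ x u * A x v - fderiv ℝ f₄ x v * A x u)
        + (fderiv ℝ f₂ x u * A3 x v - fderiv ℝ f₂ x v * A3 x u) = 0 := by
  intro x u v
  have hA2' : A2 = fun y => fderiv ℝ f₃ y - f₇ y • fderiv ℝ f₄ y := funext hA2
  obtain ⟨hd3, hc3⟩ := contDiff_infty_iff_fderiv.mp (h₃.of_le (by simp))
  obtain ⟨hd4, hc4⟩ := contDiff_infty_iff_fderiv.mp (h₄.of_le (by simp))
  have hd3' : DifferentiableAt ℝ (fderiv ℝ f₃) x := (hc3.differentiable (by simp)) x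
  have hd4' : DifferentiableAt ℝ (fderiv ℝ f₄) x := (hc4.differentiable (by simp)) x
  have hd7 : DifferentiableAt ℝ f₇ x := (h₇.differentiable (by simp)) x
  have hderiv : fderiv ℝ A2 x
      = fderiv ℝ (fderiv ℝ f₃) x -
        (f₇ x • fderiv ℝ (fderiv ℝ f₄) x + (fderiv ℝ f₇ x).smulRight (fderiv ℝ f₄ x)) := by
    rw [hA2', fderiv_fun_sub hd3' (hd7.fun_smul hd4'), fderiv_fun_smul hd7 hd4']
  have hsym3 : fderiv ℝ (fderiv ℝ f₃) x u v = fderiv ℝ (fderiv ℝ f₃) x v u :=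
    second_derivative_symmetric (fun y => (hd3 y).hasFDerivAt) hd3'.hasFDerivAt u v
  have hsym4 : fderiv ℝ (fderiv ℝ f₄) x u v = fderiv ℝ (fderiv ℝ f₄) x v u :=
    second_derivative_symmetric (fun y => (hd4 y).hasFDerivAt) hd4'.hasFDerivAt u v
  rw [hA x, hA3 x]
  simp only [hderiv, ContinuousLinearMap.sub_apply, ContinuousLinearMap.add_apply,
    ContinuousLinearMap.smul_apply, ContinuousLinearMap.smulRight_apply, smul_eq_mul]
  rw [hsym3, hsym4]
  ring
end

section
/- Let f₁, f₂, f₃, f₄, f₇ : ℝⁿ → ℝ be smooth, and define the 1-forms A = f₁ df₂ + f₃ df₄ + df₇ and A~3 = f₃ df₂ − f₁ df₄. Then df₄ ∧ dA − df₂ ∧ dA~3 = 0 as 3-forms on ℝⁿ. -/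
lemma aux_smul_fderiv {n : ℕ} (c f : (Fin n → ℝ) → ℝ) (hc : ContDiff ℝ (⊤ : ℕ∞) c)
    (hf : ContDiff ℝ (⊤ : ℕ∞) f) (x u v : Fin n → ℝ) :
    fderiv ℝ (fun y => c y • fderiv ℝ f y) x u v
      - fderiv ℝ (fun y => c y • fderiv ℝ f y) x v u
    = fderiv ℝ c x u * fderiv ℝ f x v - fderiv ℝ c x v * fderiv ℝ f x u := by
  have hdf : ContDiff ℝ (⊤ : ℕ∞) (fderiv ℝ f) := hf.fderiv_right (by exact (by simp))
  rw [fderiv_fun_smul (hc.differentiable (by simp) x) (hdf.differentiable (by simp) x)]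
  have hsym := (hf.contDiffAt (x := x)).isSymmSndFDerivAt (by rw [minSmoothness_of_isRCLikeNormedField]; exact WithTop.coe_le_coe.mpr le_top) u v
  simp only [ContinuousLinearMap.add_apply, ContinuousLinearMap.smul_apply,
    ContinuousLinearMap.smulRight_apply, smul_eq_mul, hsym]
  ring

theorem quaternionic_baldwin_threeform_relation_15 (n : ℕ)
    (f₁ f₂ f₃ f₄ f₇ : (Fin n → ℝ) → ℝ)
    (h₁ : ContDiff ℝ (⊤ : ℕ∞) f₁) (h₂ : ContDiff ℝ (⊤ : ℕ∞) f₂) (h₃ : ContDiff ℝ (⊤ : ℕ∞) f₃)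
    (h₄ : ContDiff ℝ (⊤ : ℕ∞) f₄) (h₇ : ContDiff ℝ (⊤ : ℕ∞) f₇)
    (A A3 : (Fin n → ℝ) → (Fin n → ℝ) →L[ℝ] ℝ)
    (hA : ∀ x, A x = f₁ x • fderiv ℝ f₂ x + f₃ x • fderiv ℝ f₄ x + fderiv ℝ f₇ x)
    (hA3 : ∀ x, A3 x = f₃ x • fderiv ℝ f₂ x - f₁ x • fderiv ℝ f₄ x)
    (dA dA3 : (Fin n → ℝ) → (Fin n → ℝ) → (Fin n → ℝ) → ℝ)
    (hdA : ∀ x u v, dA x u v = fderiv ℝ A x u v - fderiv ℝ A x v u)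
    (hdA3 : ∀ x u v, dA3 x u v = fderiv ℝ A3 x u v - fderiv ℝ A3 x v u) :
    ∀ (x u₁ u₂ u₃ : Fin n → ℝ),
      (fderiv ℝ f₄ x u₁ * dA x u₂ u₃ - fderiv ℝ f₄ x u₂ * dA x u₁ u₃
          + fderiv ℝ f₄ x u₃ * dA x u₁ u₂)
        - (fderiv ℝ f₂ x u₁ * dA3 x u₂ u₃ - fderiv ℝ f₂ x u₂ * dA3 x u₁ u₃
          + fderiv ℝ f₂ x u₃ * dA3 x u₁ u₂) = 0 := by
  intro x u₁ u₂ u₃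
  have hAeq : A = fun y => f₁ y • fderiv ℝ f₂ y + f₃ y • fderiv ℝ f₄ y + fderiv ℝ f₇ y :=
    funext hA
  have hA3eq : A3 = fun y => f₃ y • fderiv ℝ f₂ y - f₁ y • fderiv ℝ f₄ y := funext hA3
  have d2 : ContDiff ℝ (⊤ : ℕ∞) (fderiv ℝ f₂) := h₂.fderiv_right (by exact (by simp))
  have d4 : ContDiff ℝ (⊤ : ℕ∞) (fderiv ℝ f₄) := h₄.fderiv_right (by exact (by simp))
  have d7 : ContDiff ℝ (⊤ : ℕ∞) (fderiv ℝ f₇) := h₇.fderiv_right (by exact (by simp))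
  have D12 : DifferentiableAt ℝ (fun y => f₁ y • fderiv ℝ f₂ y) x :=
    ((h₁.smul d2).differentiable (by simp) x)
  have D34 : DifferentiableAt ℝ (fun y => f₃ y • fderiv ℝ f₄ y) x :=
    ((h₃.smul d4).differentiable (by simp) x)
  have D32 : DifferentiableAt ℝ (fun y => f₃ y • fderiv ℝ f₂ y) x :=
    ((h₃.smul d2).differentiable (by simp) x)
  have D14 : DifferentiableAt ℝ (fun y => f₁ y • fderiv ℝ f₄ y) x :=
    ((h₁.smul d4).differentiable (by simp) x)
  have D7 : DifferentiableAt ℝ (fderiv ℝ f₇) x := d7.differentiable (by simp) x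
  have hdAval : ∀ u v, dA x u v
      = (fderiv ℝ f₁ x u * fderiv ℝ f₂ x v - fderiv ℝ f₁ x v * fderiv ℝ f₂ x u)
        + (fderiv ℝ f₃ x u * fderiv ℝ f₄ x v - fderiv ℝ f₃ x v * fderiv ℝ f₄ x u) := by
    intro u v
    have h7sym := (h₇.contDiffAt (x := x)).isSymmSndFDerivAt (by rw [minSmoothness_of_isRCLikeNormedField]; exact WithTop.coe_le_coe.mpr le_top) u v
    rw [hdA, hAeq, fderiv_fun_add (f := fun y => f₁ y • fderiv ℝ f₂ y + f₃ y • fderiv ℝ f₄ y) (D12.add D34) D7, fderiv_fun_add D12 D34]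
    simp only [ContinuousLinearMap.add_apply]
    rw [show ∀ a b c a' b' c' : ℝ, a + b + c - (a' + b' + c') = (a - a') + (b - b') + (c - c')
      by intros; ring]
    rw [aux_smul_fderiv f₁ f₂ h₁ h₂, aux_smul_fderiv f₃ f₄ h₃ h₄, h7sym]
    ring
  have hdA3val : ∀ u v, dA3 x u v
      = (fderiv ℝ f₃ x u * fderiv ℝ f₂ x v - fderiv ℝ f₃ x v * fderiv ℝ f₂ x u)
        - (fderiv ℝ f₁ x u * fderiv ℝ f₄ x v - fderiv ℝ f₁ x v * fderiv ℝ f₄ x u) := by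
    intro u v
    rw [hdA3, hA3eq, fderiv_fun_sub D32 D14]
    simp only [ContinuousLinearMap.sub_apply]
    rw [show ∀ a b a' b' : ℝ, a - b - (a' - b') = (a - a') - (b - b') by intros; ring]
    rw [aux_smul_fderiv f₃ f₂ h₃ h₂, aux_smul_fderiv f₁ f₄ h₁ h₄]
  simp only [hdAval, hdA3val]
  ring
end

section
/- Let f₁, f₂, f₃, f₄, f₇ : ℝⁿ → ℝ be smooth, and define the 1-forms A = f₁ df₂ + f₃ df₄ + df₇, A~2 = df₃ − f₇ df₄, A~3 = f₃ df₂ − f₁ df₄. Then the 4-form dA~2 ∧ A ∧ A~3 vanishes identically on ℝⁿ. -/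
open Matrix

noncomputable def altSum (w x y z : Fin 4 → ℝ) : ℝ :=
  ∑ σ : Equiv.Perm (Fin 4), ((Equiv.Perm.sign σ : ℤ) : ℝ) *
    (w (σ 0) * x (σ 1) * y (σ 2) * z (σ 3))

lemma altSum_eq_det (w x y z : Fin 4 → ℝ) :
    altSum w x y z = (Matrix.of ![w, x, y, z])ᵀ.det := by
  rw [Matrix.det_apply]
  refine Finset.sum_congr rfl fun σ _ => ?_
  rw [Fin.prod_univ_four]
  simp [Matrix.transpose_apply, Matrix.of_apply, Units.smul_def, zsmul_eq_mul]

lemma altSum_zero (w x y z : Fin 4 → ℝ)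
    (h : w = x ∨ w = y ∨ w = z ∨ x = y ∨ x = z ∨ y = z) :
    altSum w x y z = 0 := by
  rw [altSum_eq_det, Matrix.det_transpose]
  rcases h with h | h | h | h | h | h
  · exact Matrix.det_zero_of_row_eq (i := 0) (j := 1) (by decide) (by exact h)
  · exact Matrix.det_zero_of_row_eq (i := 0) (j := 2) (by decide) (by exact h)
  · exact Matrix.det_zero_of_row_eq (i := 0) (j := 3) (by decide) (by exact h)
  · exact Matrix.det_zero_of_row_eq (i := 1) (j := 2) (by decide) (by exact h)
  · exact Matrix.det_zero_of_row_eq (i := 1) (j := 3) (by decide) (by exact h)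
  · exact Matrix.det_zero_of_row_eq (i := 2) (j := 3) (by decide) (by exact h)

/-- For smooth `f₁ f₂ f₃ f₄ f₇ : ℝⁿ → ℝ`, with
`A = f₁ df₂ + f₃ df₄ + df₇`, `A~2 = df₃ − f₇ df₄`, `A~3 = f₃ df₂ − f₁ df₄`,
the 4-form `dA~2 ∧ A ∧ A~3` (expressed via alternation over all permutations
of the four arguments) vanishes identically. -/
theorem quaternionic_baldwin_fourform_18 (n : ℕ)
    (f₁ f₂ f₃ f₄ f₇ : (Fin n → ℝ) → ℝ)
    (h₁ : ContDiff ℝ (⊤ : ℕ∞) f₁) (h₂ : ContDiff ℝ (⊤ : ℕ∞) f₂) (h₃ : ContDiff ℝ (⊤ : ℕ∞) f₃)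
    (h₄ : ContDiff ℝ (⊤ : ℕ∞) f₄) (h₇ : ContDiff ℝ (⊤ : ℕ∞) f₇)
    (A A2 A3 : (Fin n → ℝ) → (Fin n → ℝ) →L[ℝ] ℝ)
    (hA : ∀ x, A x = f₁ x • fderiv ℝ f₂ x + f₃ x • fderiv ℝ f₄ x + fderiv ℝ f₇ x)
    (hA2 : ∀ x, A2 x = fderiv ℝ f₃ x - f₇ x • fderiv ℝ f₄ x)
    (hA3 : ∀ x, A3 x = f₃ x • fderiv ℝ f₂ x - f₁ x • fderiv ℝ f₄ x)
    (dA2 : (Fin n → ℝ) → (Fin n → ℝ) → (Fin n → ℝ) → ℝ)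
    (hdA2 : ∀ x u v, dA2 x u v = fderiv ℝ A2 x u v - fderiv ℝ A2 x v u) :
    ∀ (x : Fin n → ℝ) (u : Fin 4 → Fin n → ℝ),
      ∑ σ : Equiv.Perm (Fin 4), ((Equiv.Perm.sign σ : ℤ) : ℝ) *
        (dA2 x (u (σ 0)) (u (σ 1)) * A x (u (σ 2)) * A3 x (u (σ 3))) = 0 := by
  intro x u
  set p := f₁ x with hp
  set q := f₃ x with hq
  set a : Fin 4 → ℝ := fun i => fderiv ℝ f₂ x (u i) with ha
  set b : Fin 4 → ℝ := fun i => fderiv ℝ f₄ x (u i) with hb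
  set c : Fin 4 → ℝ := fun i => fderiv ℝ f₇ x (u i) with hc
  -- differentiability facts
  have hd7 : DifferentiableAt ℝ f₇ x := h₇.differentiable (by simp) x
  have hd3' : DifferentiableAt ℝ (fderiv ℝ f₃) x :=
    ((h₃.fderiv_right (m := 1) (WithTop.coe_le_coe.mpr le_top)).differentiable one_ne_zero) x
  have hd4' : DifferentiableAt ℝ (fderiv ℝ f₄) x :=
    ((h₄.fderiv_right (m := 1) (WithTop.coe_le_coe.mpr le_top)).differentiable one_ne_zero) x
  have hA2fun : A2 = fun y => fderiv ℝ f₃ y - f₇ y • fderiv ℝ f₄ y := funext hA2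
  have hD : fderiv ℝ A2 x = fderiv ℝ (fderiv ℝ f₃) x -
      (f₇ x • fderiv ℝ (fderiv ℝ f₄) x + (fderiv ℝ f₇ x).smulRight (fderiv ℝ f₄ x)) := by
    rw [hA2fun, fderiv_fun_sub (g := fun y => f₇ y • fderiv ℝ f₄ y) hd3' (hd7.smul hd4'), fderiv_fun_smul hd7 hd4']
  have hsym3 := h₃.contDiffAt (x := x) |>.isSymmSndFDerivAt (by rw [minSmoothness_of_isRCLikeNormedField]; exact WithTop.coe_le_coe.mpr le_top)
  have hsym4 := h₄.contDiffAt (x := x) |>.isSymmSndFDerivAt (by rw [minSmoothness_of_isRCLikeNormedField]; exact WithTop.coe_le_coe.mpr le_top)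
  have hdval : ∀ i j, dA2 x (u i) (u j) = b i * c j - c i * b j := by
    intro i j
    rw [hdA2, hD]
    simp only [ContinuousLinearMap.sub_apply, ContinuousLinearMap.add_apply,
      ContinuousLinearMap.smul_apply, ContinuousLinearMap.smulRight_apply, smul_eq_mul]
    rw [hsym3.eq (u i) (u j), hsym4.eq (u i) (u j)]
    simp only [hb, hc]
    ring
  have hAval : ∀ k, A x (u k) = p * a k + q * b k + c k := by
    intro k
    rw [hA]
    simp [ContinuousLinearMap.add_apply, ContinuousLinearMap.smul_apply, smul_eq_mul,
      ha, hb, hc, hp, hq]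
  have hA3val : ∀ k, A3 x (u k) = q * a k - p * b k := by
    intro k
    rw [hA3]
    simp [ContinuousLinearMap.sub_apply, ContinuousLinearMap.smul_apply, smul_eq_mul,
      ha, hb, hp, hq]
  have key : ∑ σ : Equiv.Perm (Fin 4), ((Equiv.Perm.sign σ : ℤ) : ℝ) *
        (dA2 x (u (σ 0)) (u (σ 1)) * A x (u (σ 2)) * A3 x (u (σ 3)))
      = (p*q) * altSum b c a a - (p*p) * altSum b c a b
        + (q*q) * altSum b c b a - (q*p) * altSum b c b b
        + q * altSum b c c a - p * altSum b c c b
        - ((p*q) * altSum c b a a - (p*p) * altSum c b a b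
        + (q*q) * altSum c b b a - (q*p) * altSum c b b b
        + q * altSum c b c a - p * altSum c b c b) := by
    simp only [altSum, Finset.mul_sum, ← Finset.sum_sub_distrib, ← Finset.sum_add_distrib]
    refine Finset.sum_congr rfl fun σ _ => ?_
    rw [hdval, hAval, hA3val]
    ring
  rw [key, altSum_zero b c a a (by simp), altSum_zero b c a b (by simp),
    altSum_zero b c b a (by simp), altSum_zero b c b b (by simp),
    altSum_zero b c c a (by simp), altSum_zero b c c b (by simp),
    altSum_zero c b a a (by simp), altSum_zero c b a b (by simp),
    altSum_zero c b b a (by simp), altSum_zero c b b b (by simp),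
    altSum_zero c b c a (by simp), altSum_zero c b c b (by simp)]
  ring
end
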